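/- Let n ≥ 1, N ≥ 1 and 1 ≤ a ≤ b ≤ n with a + b ≤ n. Let E be the set of all n×N matrices M with entries in {0,1} such that every column of M has column sum equal to a−1, b, or b+1. Then E is a fooling set for the columnwise extension of the Boolean interval function Π_{[a,b]} (where Π_{[a,b]} of a column equals 1 iff the column sum lies between a and b inclusive). -/
import Mathlib


/-- Replace the `i`-th row of the matrix `M1` by the `i`-th row of `M2`. -/
def replaceRow {n N : ℕ} {α : Type*} (M1 M2 : Fin n → Fin N → α) (i : Fin n) :
    Fin n → Fin N → α :=
  fun r => if r = i then M2 r else M1 r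

/-- The columnwise extension `g^N` of a function `g` on columns:
apply `g` to each of the `N` columns of the matrix `M`. -/
def colApply {n N : ℕ} {α β : Type*} (g : (Fin n → α) → β) (M : Fin n → Fin N → α) :
    Fin N → β :=
  fun j => g (fun i => M i j)

/-- `E` is a fooling set for the columnwise extension `g^N` of `g`: for all distinct
`M1, M2 ∈ E`, either `g^N(M1) ≠ g^N(M2)`, or replacing some row of `M1` by the
corresponding row of `M2` (or vice versa) changes the `g^N`-value. -/
def IsFoolingSet {n N : ℕ} {α β : Type*} (g : (Fin n → α) → β)
    (E : Set (Fin n → Fin N → α)) : Prop :=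
  ∀ M1 ∈ E, ∀ M2 ∈ E, M1 ≠ M2 →
    colApply g M1 ≠ colApply g M2 ∨
    (∃ i, colApply g (replaceRow M1 M2 i) ≠ colApply g M1) ∨
    (∃ i, colApply g (replaceRow M2 M1 i) ≠ colApply g M2)

lemma exists_lt_of_sum_lt'' {n : ℕ} {x y : Fin n → ℕ} (h : ∑ i, x i < ∑ i, y i) :
    ∃ i, x i < y i := by
  by_contra hc
  push_neg at hc
  exact absurd (Finset.sum_le_sum fun i _ => hc i) (not_le.mpr h)

lemma exists_lt_of_sum_eq'' {n : ℕ} {x y : Fin n → ℕ} (hne : x ≠ y)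
    (h : ∑ i, x i = ∑ i, y i) : ∃ i, x i < y i := by
  by_contra hc
  push_neg at hc
  obtain ⟨i, hi⟩ := Function.ne_iff.mp hne
  have := Finset.sum_lt_sum (fun i _ => hc i)
    ⟨i, Finset.mem_univ i, lt_of_le_of_ne (hc i) hi.symm⟩
  omega

lemma sum_replaceRow'' {n N : ℕ} (M1 M2 : Fin n → Fin N → ℕ) (i0 : Fin n) (j : Fin N) :
    ∑ i, replaceRow M1 M2 i0 i j + M1 i0 j = ∑ i, M1 i j + M2 i0 j := by
  have h1 := Finset.sum_erase_add Finset.univ (fun i => replaceRow M1 M2 i0 i j)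
    (Finset.mem_univ i0)
  have h2 := Finset.sum_erase_add Finset.univ (fun i => M1 i j) (Finset.mem_univ i0)
  have h3 : ∑ i ∈ Finset.univ.erase i0, replaceRow M1 M2 i0 i j
      = ∑ i ∈ Finset.univ.erase i0, M1 i j :=
    Finset.sum_congr rfl fun i hi => by
      simp [replaceRow, (Finset.mem_erase.mp hi).1]
  have h4 : replaceRow M1 M2 i0 i0 j = M2 i0 j := by simp [replaceRow]
  beta_reduce at h1 h2
  omega

lemma key'' {n N a b : ℕ} (M1 M2 : Fin n → Fin N → ℕ) (j : Fin N) (i0 : Fin n)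
    (hnew : (a ≤ ∑ i, replaceRow M1 M2 i0 i j ∧ ∑ i, replaceRow M1 M2 i0 i j ≤ b) ↔
      ¬(a ≤ ∑ i, M1 i j ∧ ∑ i, M1 i j ≤ b)) :
    colApply (fun x : Fin n → ℕ => if a ≤ ∑ i, x i ∧ ∑ i, x i ≤ b then 1 else 0)
      (replaceRow M1 M2 i0) ≠
    colApply (fun x : Fin n → ℕ => if a ≤ ∑ i, x i ∧ ∑ i, x i ≤ b then 1 else 0) M1 := by
  intro h
  have hj := congrFun h j
  simp only [colApply] at hj
  split_ifs at hj <;> tauto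

/-- For `1 ≤ a ≤ b ≤ n` with `a + b ≤ n`, the set of Boolean (0/1-entry) `n × N`
matrices all of whose columns sum to `a - 1`, `b` or `b + 1` is a fooling set for
the columnwise extension of the Boolean interval function `Π_[a,b]` (equal to 1 iff
the column sum lies in `[a, b]`). -/
theorem stmt_12 (n N a b : ℕ) (hn : 1 ≤ n) (hN : 1 ≤ N)
    (ha : 1 ≤ a) (hab : a ≤ b) (hbn : b ≤ n) (hsum : a + b ≤ n) :
    IsFoolingSet (fun x : Fin n → ℕ => if a ≤ ∑ i, x i ∧ ∑ i, x i ≤ b then 1 else 0)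
      {M : Fin n → Fin N → ℕ | (∀ i j, M i j ≤ 1) ∧
        ∀ j, (∑ i, M i j = a - 1 ∨ ∑ i, M i j = b ∨ ∑ i, M i j = b + 1)} := by
  intro M1 hM1 M2 hM2 hne
  obtain ⟨h1le, h1sum⟩ := hM1
  obtain ⟨h2le, h2sum⟩ := hM2
  by_cases hg : colApply (fun x : Fin n → ℕ => if a ≤ ∑ i, x i ∧ ∑ i, x i ≤ b then 1 else 0) M1
      = colApply (fun x : Fin n → ℕ => if a ≤ ∑ i, x i ∧ ∑ i, x i ≤ b then 1 else 0) M2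
  swap
  · exact Or.inl hg
  right; left
  have hxy : ∃ j, (fun i => M1 i j) ≠ (fun i => M2 i j) := by
    by_contra hc
    push_neg at hc
    exact hne (funext fun i => funext fun j => congrFun (hc j) i)
  obtain ⟨j, hj⟩ := hxy
  have hgj := congrFun hg j
  simp only [colApply] at hgj
  rcases h1sum j with h1 | h1 | h1 <;> rcases h2sum j with h2 | h2 | h2
  -- case (a-1, a-1)
  · obtain ⟨i0, hi0⟩ := exists_lt_of_sum_eq'' hj (h1.trans h2.symm)
    refine ⟨i0, key'' M1 M2 j i0 ?_⟩
    have h10 := h1le i0 j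
    have h20 := h2le i0 j
    have hs := sum_replaceRow'' M1 M2 i0 j
    omega
  -- case (a-1, b): contradiction
  · exfalso; split_ifs at hgj <;> omega
  -- case (a-1, b+1)
  · obtain ⟨i0, hi0⟩ := exists_lt_of_sum_lt'' (x := fun i => M1 i j) (y := fun i => M2 i j)
      (by beta_reduce; omega)
    refine ⟨i0, key'' M1 M2 j i0 ?_⟩
    have h10 := h1le i0 j
    have h20 := h2le i0 j
    have hs := sum_replaceRow'' M1 M2 i0 j
    omega
  -- case (b, a-1): contradiction
  · exfalso; split_ifs at hgj <;> omega
  -- case (b, b)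
  · obtain ⟨i0, hi0⟩ := exists_lt_of_sum_eq'' hj (h1.trans h2.symm)
    refine ⟨i0, key'' M1 M2 j i0 ?_⟩
    have h10 := h1le i0 j
    have h20 := h2le i0 j
    have hs := sum_replaceRow'' M1 M2 i0 j
    omega
  -- case (b, b+1): contradiction
  · exfalso; split_ifs at hgj <;> omega
  -- case (b+1, a-1)
  · obtain ⟨i0, hi0⟩ := exists_lt_of_sum_lt'' (x := fun i => M2 i j) (y := fun i => M1 i j)
      (by beta_reduce; omega)
    refine ⟨i0, key'' M1 M2 j i0 ?_⟩
    have h10 := h1le i0 j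
    have h20 := h2le i0 j
    have hs := sum_replaceRow'' M1 M2 i0 j
    omega
  -- case (b+1, b): contradiction
  · exfalso; split_ifs at hgj <;> omega
  -- case (b+1, b+1)
  · obtain ⟨i0, hi0⟩ := exists_lt_of_sum_eq'' (Ne.symm hj) (h2.trans h1.symm)
    refine ⟨i0, key'' M1 M2 j i0 ?_⟩
    have h10 := h1le i0 j
    have h20 := h2le i0 j
    have hs := sum_replaceRow'' M1 M2 i0 j
    omega
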